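/- arXiv:1504.03391 — 2 statements merged into one kernel-verified Lean document; each statement's English description precedes it below -/
import Mathlib

section
/- Let f : {0,1}^n → [0,1] be a submodular function and c > 0 a constant such that |∂_i f(x)| ≤ c/n for all i ∈ [n] and all x ∈ {0,1}^n. Then Σ_{i=1}^n Σ_{j=1}^n ‖∂_{ij} f‖₂² ≤ 4c²/√n. -/
open Finset

noncomputable section

/-- The real value (0 or 1) of a Boolean coordinate. -/
def bval (b : Bool) : ℝ := if b then 1 else 0

/-- Expectation over the uniform distribution on `{0,1}^n`. -/
def EU {n : ℕ} (g : (Fin n → Bool) → ℝ) : ℝ :=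
  (∑ x : Fin n → Bool, g x) / 2 ^ n

/-- `ℓ₂` norm with respect to the uniform distribution. -/
def l2norm {n : ℕ} (g : (Fin n → Bool) → ℝ) : ℝ :=
  Real.sqrt (EU (fun x => g x ^ 2))

/-- `ℓ₁` norm with respect to the uniform distribution. -/
def l1norm {n : ℕ} (g : (Fin n → Bool) → ℝ) : ℝ :=
  EU (fun x => |g x|)

/-- Discrete partial derivative `∂_i f`. -/
def d1 {n : ℕ} (f : (Fin n → Bool) → ℝ) (i : Fin n) (x : Fin n → Bool) : ℝ :=
  f (Function.update x i true) - f (Function.update x i false)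

/-- Second-order discrete derivative `∂_{ij} f`, with `∂_{ii} f ≡ 0`. -/
def d2 {n : ℕ} (f : (Fin n → Bool) → ℝ) (i j : Fin n) (x : Fin n → Bool) : ℝ :=
  if i = j then 0 else
    f (Function.update (Function.update x i true) j true)
      - f (Function.update (Function.update x i true) j false)
      - f (Function.update (Function.update x i false) j true)
      + f (Function.update (Function.update x i false) j false)

/-- The parity (character) `χ_S(x) = (-1)^{Σ_{i∈S} x_i}`. -/
def chi {n : ℕ} (S : Finset (Fin n)) (x : Fin n → Bool) : ℝ :=
  ∏ i ∈ S, (if x i then (-1 : ℝ) else 1)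

/-- The Fourier coefficient `f̂(S) = E_{x∼U}[f(x) χ_S(x)]`. -/
def fcoeff {n : ℕ} (f : (Fin n → Bool) → ℝ) (S : Finset (Fin n)) : ℝ :=
  EU (fun x => f x * chi S x)

/-- Submodularity of a function on the Boolean cube. -/
def Submodular {n : ℕ} (f : (Fin n → Bool) → ℝ) : Prop :=
  ∀ x y, f (x ⊔ y) + f (x ⊓ y) ≤ f x + f y

/-- `f` is XOS: a maximum of finitely many nonnegative linear functions. -/
def IsXOS {n : ℕ} (f : (Fin n → Bool) → ℝ) : Prop :=
  ∃ (m : ℕ) (w : Fin (m + 1) → Fin n → ℝ),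
    (∀ c i, 0 ≤ w c i) ∧
    ∀ x, f x = Finset.univ.sup' Finset.univ_nonempty
      (fun c => ∑ i, w c i * bval (x i))

open Classical in
/-- Probability of an event under the uniform distribution on `{0,1}^n`. -/
def PrU {n : ℕ} (P : (Fin n → Bool) → Prop) : ℝ :=
  EU (fun x => if P x then 1 else 0)

/-- The threshold norm `‖h‖_T = sup{α ≥ 0 : Pr[|h(x)| ≥ α] ≥ α³}`. -/
def tnorm {n : ℕ} (h : (Fin n → Bool) → ℝ) : ℝ :=
  sSup {α : ℝ | 0 ≤ α ∧ α ^ 3 ≤ PrU (fun x => α ≤ |h x|)}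

end

/-!
For fixed `i`, submodularity makes every `∂_{ij} f` nonpositive, and `|∂_{ij} f| ≤ 2c/n`, so
`(∂_{ij} f)² ≤ (2c/n) · (-∂_{ij} f)`. The mean of `-∂_{ij} f` is twice the Fourier coefficient
`E[∂_i f · χ_{j}]`, and summing over `j` gives `2 E[∂_i f · Σ_j χ_{j}]`, which Cauchy–Schwarz
bounds by `2 (c/n) √n` since the characters `χ_{j}` are orthonormal. Summing over `i` gives
`n · 4 (c/n)² √n = 4c²/√n`.
-/

section

variable {n : ℕ}

def flipAt (j : Fin n) (x : Fin n → Bool) : Fin n → Bool :=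
  Function.update x j (!x j)

theorem flipAt_involutive (j : Fin n) : Function.Involutive (flipAt j) := by
  intro x
  ext k
  by_cases h : k = j
  · subst h; simp [flipAt]
  · simp [flipAt, h]

theorem sum_comp_flipAt (j : Fin n) (F : (Fin n → Bool) → ℝ) :
    ∑ x, F (flipAt j x) = ∑ x, F x :=
  Equiv.sum_comp (flipAt_involutive j).toPerm F

theorem sum_eq_zero_of_comp_flipAt_eq_neg (j : Fin n) {F : (Fin n → Bool) → ℝ}
    (hF : ∀ x, F (flipAt j x) = -F x) : ∑ x, F x = 0 := by
  have h := sum_comp_flipAt j F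
  rw [Fintype.sum_congr _ _ hF, sum_neg_distrib] at h
  linarith

theorem chi_singleton (j : Fin n) (x : Fin n → Bool) :
    chi {j} x = if x j then -1 else 1 :=
  prod_singleton _ _

theorem chi_singleton_flipAt_self (j : Fin n) (x : Fin n → Bool) :
    chi {j} (flipAt j x) = -chi {j} x := by
  cases h : x j <;> simp [chi_singleton, flipAt, h]

theorem chi_singleton_flipAt_of_ne {j k : Fin n} (h : k ≠ j) (x : Fin n → Bool) :
    chi {k} (flipAt j x) = chi {k} x := by
  simp [chi_singleton, flipAt, h]

theorem chi_singleton_mul_self (j : Fin n) (x : Fin n → Bool) : chi {j} x * chi {j} x = 1 := by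
  cases h : x j <;> simp [chi_singleton, h]

theorem sum_chi_singleton_mul_chi_singleton (j k : Fin n) :
    ∑ x, chi {j} x * chi {k} x = if j = k then 2 ^ n else 0 := by
  split_ifs with h
  · simp [h, chi_singleton_mul_self, card_univ]
  · refine sum_eq_zero_of_comp_flipAt_eq_neg j fun x => ?_
    rw [chi_singleton_flipAt_self, chi_singleton_flipAt_of_ne (Ne.symm h), neg_mul]

theorem sum_sq_sum_chi_singleton :
    ∑ x : Fin n → Bool, (∑ j, chi {j} x) ^ 2 = n * 2 ^ n := by
  simp_rw [sq, sum_mul_sum]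
  rw [sum_comm]
  simp_rw [sum_comm (s := (univ : Finset (Fin n → Bool))), sum_chi_singleton_mul_chi_singleton,
    sum_ite_eq, if_pos (mem_univ _), sum_const, card_univ, Fintype.card_fin, nsmul_eq_mul]

theorem two_mul_sum_mul_chi_singleton (g : (Fin n → Bool) → ℝ) (j : Fin n) :
    2 * ∑ x, g x * chi {j} x
      = ∑ x, (g (Function.update x j false) - g (Function.update x j true)) := by
  have pair : ∀ x, g x * chi {j} x + g (flipAt j x) * chi {j} (flipAt j x)
      = g (Function.update x j false) - g (Function.update x j true) := by
    intro x
    have hx : Function.update x j (x j) = x := Function.update_eq_self j x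
    cases h : x j <;> rw [h] at hx <;> simp only [chi_singleton, flipAt, h, hx,
      Bool.not_false, Bool.not_true, Function.update_self, Bool.false_eq_true, ↓reduceIte, mul_one,
      mul_neg] <;> ring
  rw [two_mul]
  nth_rw 2 [← sum_comp_flipAt j]
  rw [← sum_add_distrib, Fintype.sum_congr _ _ pair]

theorem sum_mul_sum_chi_singleton_le {g : (Fin n → Bool) → ℝ} {α : ℝ}
    (hg : ∀ x, |g x| ≤ α) :
    ∑ x, g x * ∑ j, chi {j} x ≤ α * 2 ^ n * √n := by
  have hg2 : ∑ x, g x ^ 2 ≤ α ^ 2 * 2 ^ n := by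
    calc ∑ x, g x ^ 2 ≤ ∑ _x : Fin n → Bool, α ^ 2 :=
          sum_le_sum fun x _ => sq_le_sq' (abs_le.1 (hg x)).1 (abs_le.1 (hg x)).2
      _ = α ^ 2 * 2 ^ n := by simp [card_univ, mul_comm]
  have hα : 0 ≤ α := (abs_nonneg _).trans (hg fun _ => false)
  calc ∑ x, g x * ∑ j, chi {j} x
      ≤ √(∑ x, g x ^ 2) * √(∑ x : Fin n → Bool, (∑ j, chi {j} x) ^ 2) :=
        Real.sum_mul_le_sqrt_mul_sqrt _ _ _
    _ ≤ √(α ^ 2 * 2 ^ n) * √(n * 2 ^ n) := by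
        rw [sum_sq_sum_chi_singleton]; gcongr
    _ = α * 2 ^ n * √n := by
        rw [Real.sqrt_mul (by positivity), Real.sqrt_mul (Nat.cast_nonneg _), Real.sqrt_sq hα]
        have := Real.mul_self_sqrt (pow_nonneg zero_le_two n : (0 : ℝ) ≤ 2 ^ n)
        linear_combination α * √n * this

theorem d2_eq_sub_d1 (f : (Fin n → Bool) → ℝ) (i j : Fin n) (x : Fin n → Bool) :
    d2 f i j x = d1 f i (Function.update x j true) - d1 f i (Function.update x j false) := by
  by_cases hij : i = j
  · subst hij; simp [d2, d1]
  · simp only [d2, d1, if_neg hij, Function.update_comm hij]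
    ring

theorem Submodular.d2_nonpos {f : (Fin n → Bool) → ℝ} (hf : Submodular f) (i j : Fin n)
    (x : Fin n → Bool) : d2 f i j x ≤ 0 := by
  by_cases hij : i = j
  · simp [d2, hij]
  have hsup : Function.update (Function.update x i true) j false
      ⊔ Function.update (Function.update x i false) j true
      = Function.update (Function.update x i true) j true := by
    ext k; simp only [Pi.sup_apply, Function.update_apply]; split_ifs <;> simp_all
  have hinf : Function.update (Function.update x i true) j false
      ⊓ Function.update (Function.update x i false) j true
      = Function.update (Function.update x i false) j false := by
    ext k; simp only [Pi.inf_apply, Function.update_apply]; split_ifs <;> simp_all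
  have h := hf (Function.update (Function.update x i true) j false)
    (Function.update (Function.update x i false) j true)
  rw [hsup, hinf] at h
  simp only [d2, if_neg hij]
  linarith

theorem abs_d2_le {f : (Fin n → Bool) → ℝ} {i : Fin n} {α : ℝ} (hα : ∀ x, |d1 f i x| ≤ α)
    (j : Fin n) (x : Fin n → Bool) : |d2 f i j x| ≤ 2 * α := by
  rw [d2_eq_sub_d1]
  linarith [abs_sub (d1 f i (Function.update x j true)) (d1 f i (Function.update x j false)),
    hα (Function.update x j true), hα (Function.update x j false)]

theorem Submodular.sum_sum_sq_d2_le {f : (Fin n → Bool) → ℝ} (hf : Submodular f) {i : Fin n} {α : ℝ}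
    (hα : ∀ x, |d1 f i x| ≤ α) :
    ∑ j, ∑ x, d2 f i j x ^ 2 ≤ 4 * α ^ 2 * √n * 2 ^ n := by
  have sq_le : ∀ j x, d2 f i j x ^ 2 ≤ 2 * α * -d2 f i j x := by
    intro j x
    have h := abs_d2_le hα j x
    rw [abs_of_nonpos (hf.d2_nonpos i j x)] at h
    nlinarith [hf.d2_nonpos i j x]
  have mean_neg : ∀ j, ∑ x, -d2 f i j x = 2 * ∑ x, d1 f i x * chi {j} x := by
    intro j
    simp_rw [two_mul_sum_mul_chi_singleton, d2_eq_sub_d1, neg_sub]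
  calc ∑ j, ∑ x, d2 f i j x ^ 2
      ≤ ∑ j, ∑ x, 2 * α * -d2 f i j x := by gcongr with j _ x _; exact sq_le j x
    _ = 2 * α * ∑ j, ∑ x, -d2 f i j x := by simp only [mul_sum]
    _ = 4 * α * ∑ j, ∑ x, d1 f i x * chi {j} x := by simp only [mean_neg, ← mul_sum]; ring
    _ = 4 * α * ∑ x, d1 f i x * ∑ j, chi {j} x := by rw [sum_comm]; simp only [mul_sum]
    _ ≤ 4 * α * (α * 2 ^ n * √n) := by
        have hα0 : 0 ≤ α := (abs_nonneg _).trans (hα fun _ => false)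
        gcongr
        exact sum_mul_sum_chi_singleton_le hα
    _ = 4 * α ^ 2 * √n * 2 ^ n := by ring

theorem l2norm_sq (g : (Fin n → Bool) → ℝ) : l2norm g ^ 2 = (∑ x, g x ^ 2) / 2 ^ n :=
  Real.sq_sqrt (by unfold EU; positivity)

end

theorem stmt6_general {n : ℕ} (f : (Fin n → Bool) → ℝ) (hf : Submodular f)
    (c : ℝ)
    (hder : ∀ (i : Fin n) (x : Fin n → Bool), |d1 f i x| ≤ c / n) :
    ∑ i : Fin n, ∑ j : Fin n, l2norm (d2 f i j) ^ 2 ≤ 4 * c ^ 2 / Real.sqrt n := by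
  calc ∑ i : Fin n, ∑ j : Fin n, l2norm (d2 f i j) ^ 2
      = ∑ i : Fin n, (∑ j, ∑ x, d2 f i j x ^ 2) / 2 ^ n := by
        simp_rw [l2norm_sq, sum_div]
    _ ≤ ∑ _i : Fin n, 4 * (c / n) ^ 2 * √n := by
        gcongr with i
        rw [div_le_iff₀ (by positivity)]
        exact hf.sum_sum_sq_d2_le (hder i)
    _ = 4 * c ^ 2 / √n := by
        rcases Nat.eq_zero_or_pos n with rfl | hn
        · simp
        have hs := Real.mul_self_sqrt (Nat.cast_nonneg n : (0 : ℝ) ≤ n)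
        have hs_pos : (0 : ℝ) < √n := by positivity
        rw [sum_const, card_univ, Fintype.card_fin, nsmul_eq_mul]
        field_simp
        linear_combination c ^ 2 * hs

/-- If f : {0,1}^n → [0,1] is submodular and |∂_i f(x)| ≤ c/n for all i, x,
then Σ_{i,j} ‖∂_{ij} f‖₂² ≤ 4c²/√n. -/
theorem stmt6 {n : ℕ} (f : (Fin n → Bool) → ℝ) (hf : Submodular f)
    (hrange : ∀ x, f x ∈ Set.Icc (0 : ℝ) 1) (c : ℝ) (hc : 0 < c)
    (hder : ∀ (i : Fin n) (x : Fin n → Bool), |d1 f i x| ≤ c / n) :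
    ∑ i : Fin n, ∑ j : Fin n, l2norm (d2 f i j) ^ 2 ≤ 4 * c ^ 2 / Real.sqrt n :=
  stmt6_general f hf c hder
end

section
/- Let h : {0,1}^k → {0,1} be computed by a monotone DNF with s terms, h(x) = ⋁_{j=1}^s ⋀_{i ∈ T_j} x_i, where each T_j ⊆ [k] is nonempty and |T_j| ≤ t for an integer t ≥ 1. Define f : {0,1}^k → [0,1] by f(0) = 0 (where 0 is the all-zeroes vector) and f(x) = 1 − (1 − h(x))/t for x ≠ 0. Then f is an XOS function; in fact f(x) = max{ max_{j∈[s]} (Σ_{i∈T_j} x_i)/|T_j| , max_{i∈[k]} ((t−1)/t) x_i }, a maximum of s + k nonnegative linear functions. -/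
open Finset

/-!
On a nonzero input, either some term `T_j` is fully satisfied, and then its density
`(∑_{i ∈ T_j} x_i) / |T_j|` is `1` while every linear form is at most `1`; or every term misses a
coordinate, so each density is at most `1 - 1/|T_j| ≤ 1 - 1/t`, and the maximum is attained by the
form `((t-1)/t) x_i` at a coordinate with `x_i = 1`. At `0` all forms vanish. Hence `f` is the
maximum of the `s + k` nonnegative linear forms, which is XOS.
-/

section Sup'

variable {ι κ α : Type*} [Fintype ι] [Nonempty ι] [Fintype κ] [Nonempty κ]

theorem Finset.sup'_univ_comp_equiv [ConditionallyCompleteLattice α] (e : κ ≃ ι) (g : ι → α) :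
    univ.sup' univ_nonempty (g ∘ e) = univ.sup' univ_nonempty g := by
  simp only [sup'_univ_eq_ciSup, Function.comp_apply, e.iSup_comp]

theorem Finset.sup'_univ_sum [LinearOrder α] (g : ι ⊕ κ → α) :
    univ.sup' univ_nonempty g =
      max (univ.sup' univ_nonempty (g ∘ Sum.inl)) (univ.sup' univ_nonempty (g ∘ Sum.inr)) := by
  refine le_antisymm (sup'_le _ _ ?_) (max_le (sup'_le _ _ ?_) (sup'_le _ _ ?_))
  · rintro (a | b) -
    · exact le_max_of_le_left (le_sup' (g ∘ Sum.inl) (mem_univ a))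
    · exact le_max_of_le_right (le_sup' (g ∘ Sum.inr) (mem_univ b))
  · exact fun a _ => le_sup' g (mem_univ (Sum.inl a))
  · exact fun b _ => le_sup' g (mem_univ (Sum.inr b))

end Sup'

theorem isXOS_of_eq_sup' {n : ℕ} {ι : Type*} [Fintype ι] [Nonempty ι] (w : ι → Fin n → ℝ)
    (hw : ∀ c i, 0 ≤ w c i) {f : (Fin n → Bool) → ℝ}
    (hf : ∀ x, f x = univ.sup' univ_nonempty fun c => ∑ i, w c i * bval (x i)) : IsXOS f := by
  obtain ⟨m, hm⟩ := Nat.exists_eq_succ_of_ne_zero (Fintype.card_ne_zero (α := ι))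
  let e : Fin (m + 1) ≃ ι := (finCongr hm.symm).trans (Fintype.equivFin ι).symm
  refine ⟨m, fun c => w (e c), fun c i => hw _ _, fun x => ?_⟩
  rw [hf, ← Finset.sup'_univ_comp_equiv e]
  rfl

section BoolSums

variable {α : Type*} (x : α → Bool) (S : Finset α)

@[simp] theorem bval_true : bval true = 1 := rfl

@[simp] theorem bval_false : bval false = 0 := rfl

theorem bval_le_one (b : Bool) : bval b ≤ 1 := by cases b <;> simp

theorem sum_ite_mem_mul_bval [Fintype α] [DecidableEq α] (c : ℝ) :
    ∑ i, (if i ∈ S then c else 0) * bval (x i) = c * ∑ i ∈ S, bval (x i) := by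
  simp only [ite_mul, zero_mul, sum_ite_mem, univ_inter, mul_sum]

theorem sum_ite_eq_mul_bval [Fintype α] [DecidableEq α] (a : α) (c : ℝ) :
    ∑ i, (if i = a then c else 0) * bval (x i) = c * bval (x a) := by
  simp only [ite_mul, zero_mul, sum_ite_eq', mem_univ, if_true]

theorem sum_bval_le_card : ∑ i ∈ S, bval (x i) ≤ #S := by
  simpa using sum_le_sum fun i (_ : i ∈ S) => bval_le_one (x i)

theorem sum_bval_eq_card (hS : ∀ i ∈ S, x i = true) : ∑ i ∈ S, bval (x i) = #S := by
  simp [sum_congr rfl fun i hi => congrArg bval (hS i hi)]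

theorem sum_bval_le_card_sub_one {a : α} (ha : a ∈ S) (hxa : x a = false) :
    ∑ i ∈ S, bval (x i) ≤ #S - 1 := by
  classical
  rw [← add_sum_erase S _ ha, hxa, bval_false, zero_add, ← Nat.cast_pred (card_pos.2 ⟨a, ha⟩),
    ← card_erase_of_mem ha]
  exact sum_bval_le_card x _

theorem sum_bval_div_card_le_one : (∑ i ∈ S, bval (x i)) / #S ≤ 1 :=
  div_le_one_of_le₀ (sum_bval_le_card x S) (Nat.cast_nonneg _)

theorem sum_bval_div_card_eq_one (hS : S.Nonempty) (hxS : ∀ i ∈ S, x i = true) :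
    (∑ i ∈ S, bval (x i)) / #S = 1 := by
  rw [sum_bval_eq_card x S hxS, div_self (by simpa using hS.ne_empty)]

theorem sum_bval_div_card_le {t : ℕ} (hSt : #S ≤ t) {a : α} (ha : a ∈ S) (hxa : x a = false) :
    (∑ i ∈ S, bval (x i)) / #S ≤ ((t : ℝ) - 1) / t := by
  have hS : (1 : ℝ) ≤ #S := by exact_mod_cast card_pos.2 ⟨a, ha⟩
  have hSt' : (#S : ℝ) ≤ t := by exact_mod_cast hSt
  have ht : (0 : ℝ) < t := by linarith
  calc (∑ i ∈ S, bval (x i)) / #S ≤ (#S - 1) / #S := by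
        gcongr; exact sum_bval_le_card_sub_one x S ha hxa
    _ = 1 - 1 / #S := by field_simp
    _ ≤ 1 - 1 / t := by gcongr
    _ = ((t : ℝ) - 1) / t := by field_simp

end BoolSums

section MonotoneDNF

variable {ι α : Type*} [Fintype ι] [Nonempty ι] (T : ι → Finset α) (x : α → Bool)

theorem sup'_sum_bval_div_card_eq_one {j : ι} (hj : (T j).Nonempty)
    (hxj : ∀ i ∈ T j, x i = true) :
    univ.sup' univ_nonempty (fun j => (∑ i ∈ T j, bval (x i)) / #(T j)) = 1 :=
  le_antisymm (sup'_le _ _ fun j _ => sum_bval_div_card_le_one x (T j))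
    (le_sup'_of_le _ (mem_univ j) (sum_bval_div_card_eq_one x (T j) hj hxj).ge)

theorem sup'_sum_bval_div_card_le {t : ℕ} (hTt : ∀ j, #(T j) ≤ t)
    (hx : ∀ j, ∃ i ∈ T j, x i = false) :
    univ.sup' univ_nonempty (fun j => (∑ i ∈ T j, bval (x i)) / #(T j)) ≤ ((t : ℝ) - 1) / t :=
  sup'_le _ _ fun j _ =>
    let ⟨_, hi, hxi⟩ := hx j
    sum_bval_div_card_le x (T j) (hTt j) hi hxi

variable [Fintype α] [Nonempty α]

theorem sup'_mul_bval_le {c : ℝ} (hc : 0 ≤ c) :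
    univ.sup' univ_nonempty (fun i => c * bval (x i)) ≤ c :=
  sup'_le _ _ fun _ _ => mul_le_of_le_one_right hc (bval_le_one _)

theorem sup'_mul_bval_eq {c : ℝ} (hc : 0 ≤ c) {a : α} (ha : x a = true) :
    univ.sup' univ_nonempty (fun i => c * bval (x i)) = c :=
  le_antisymm (sup'_mul_bval_le x hc) (le_sup'_of_le _ (mem_univ a) (by simp [ha]))

theorem max_sup'_sum_bval_div_card_sup'_mul_bval_eq {t : ℕ} (ht : 1 ≤ t)
    (hTne : ∀ j, (T j).Nonempty) (hTt : ∀ j, #(T j) ≤ t) :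
    max (univ.sup' univ_nonempty fun j => (∑ i ∈ T j, bval (x i)) / #(T j))
        (univ.sup' univ_nonempty fun i => ((t : ℝ) - 1) / t * bval (x i)) =
      if x = (fun _ => false) then 0
      else if ∃ j, ∀ i ∈ T j, x i = true then 1 else 1 - 1 / (t : ℝ) := by
  have ht' : (1 : ℝ) ≤ t := by exact_mod_cast ht
  have hc : 0 ≤ ((t : ℝ) - 1) / t := div_nonneg (by linarith) (by linarith)
  by_cases hx0 : x = fun _ => false
  · subst hx0
    simp
  obtain ⟨a, ha⟩ : ∃ a, x a = true := by
    by_contra! hx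
    exact hx0 (funext fun i => by simpa using hx i)
  rw [if_neg hx0]
  split_ifs with hsat
  · obtain ⟨j, hj⟩ := hsat
    rw [sup'_sum_bval_div_card_eq_one T x (hTne j) hj, max_eq_left]
    exact (sup'_mul_bval_le x hc).trans (by rw [div_le_one (by linarith)]; linarith)
  · simp only [not_exists, not_forall, exists_prop, Bool.not_eq_true] at hsat
    rw [sup'_mul_bval_eq x hc ha, max_eq_right (sup'_sum_bval_div_card_le T x hTt hsat)]
    field_simp

end MonotoneDNF

theorem isXOS_max_sup' {ι : Type*} [Fintype ι] [Nonempty ι] {n : ℕ} [Nonempty (Fin n)]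
    (T : ι → Finset (Fin n)) {c : ℝ} (hc : 0 ≤ c) :
    IsXOS fun x => max (univ.sup' univ_nonempty fun j => (∑ i ∈ T j, bval (x i)) / #(T j))
      (univ.sup' univ_nonempty fun i => c * bval (x i)) := by
  refine isXOS_of_eq_sup' (Sum.elim (fun j i => if i ∈ T j then (#(T j) : ℝ)⁻¹ else 0)
    fun a i => if i = a then c else 0) ?_ fun x => ?_
  · rintro (j | a) i <;> simp only [Sum.elim_inl, Sum.elim_inr] <;> split_ifs <;> positivity
  · simp only [Finset.sup'_univ_sum, Function.comp_def, Sum.elim_inl, Sum.elim_inr,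
      sum_ite_mem_mul_bval, sum_ite_eq_mul_bval, inv_mul_eq_div]

open Classical in
/-- If h is computed by a monotone DNF with s nonempty terms of
size at most t, and f(0) = 0, f(x) = 1 − (1 − h(x))/t for x ≠ 0, then f is XOS;
in fact f(x) = max{ max_j (Σ_{i∈T_j} x_i)/|T_j| , max_i ((t−1)/t)·x_i }. -/
theorem stmt16 (k s t : ℕ) (hs0 : 0 < s) (hk0 : 0 < k) (ht : 1 ≤ t)
    (T : Fin s → Finset (Fin k))
    (hTne : ∀ j, (T j).Nonempty) (hTt : ∀ j, (T j).card ≤ t)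
    (h : (Fin k → Bool) → ℝ)
    (hh : ∀ x, h x = if ∃ j, ∀ i ∈ T j, x i = true then 1 else 0)
    (f : (Fin k → Bool) → ℝ)
    (hf0 : f (fun _ => false) = 0)
    (hf : ∀ x, x ≠ (fun _ => false) → f x = 1 - (1 - h x) / t) :
    IsXOS f ∧ ∀ x, f x =
      max ((Finset.univ : Finset (Fin s)).sup' ⟨⟨0, hs0⟩, Finset.mem_univ _⟩
            (fun j => (∑ i ∈ T j, bval (x i)) / ((T j).card : ℝ)))
          ((Finset.univ : Finset (Fin k)).sup' ⟨⟨0, hk0⟩, Finset.mem_univ _⟩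
            (fun i => ((t : ℝ) - 1) / t * bval (x i))) := by
  have : Nonempty (Fin s) := ⟨⟨0, hs0⟩⟩
  have : Nonempty (Fin k) := ⟨⟨0, hk0⟩⟩
  have hf_eq : ∀ x, f x = max (univ.sup' univ_nonempty fun j => (∑ i ∈ T j, bval (x i)) / #(T j))
      (univ.sup' univ_nonempty fun i => ((t : ℝ) - 1) / t * bval (x i)) := by
    intro x
    rw [max_sup'_sum_bval_div_card_sup'_mul_bval_eq T x ht hTne hTt]
    by_cases hx0 : x = fun _ => false
    · simp [hx0, hf0]
    · rw [if_neg hx0, hf x hx0, hh x]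
      split_ifs <;> ring
  have ht' : (1 : ℝ) ≤ t := by exact_mod_cast ht
  exact ⟨funext hf_eq ▸ isXOS_max_sup' T (div_nonneg (by linarith) (by linarith)), hf_eq⟩
end
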